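/- arXiv:1402.3388 — 4 statements merged into one kernel-verified Lean document; each statement's English description precedes it below -/
import Mathlib

section
/- For every LTL formula φ (in negation normal form over atomic propositions Ap), every finite word w ∈ (2^Ap)* and every infinite word w' ∈ (2^Ap)^ω, the concatenation w·w' satisfies φ if and only if w' satisfies af(φ, w), where af is the 'after function' defined by structural recursion on φ. -/
namespace LTLF

/-- LTL formulas in negation normal form over atomic propositions `Ap`. -/
inductive LTL (Ap : Type) : Type
  | tt : LTL Ap
  | ff : LTL Ap
  | atom : Ap → LTL Ap
  | natom : Ap → LTL Ap
  | and : LTL Ap → LTL Ap → LTL Ap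
  | or : LTL Ap → LTL Ap → LTL Ap
  | next : LTL Ap → LTL Ap
  | fut : LTL Ap → LTL Ap
  | glob : LTL Ap → LTL Ap
  | untl : LTL Ap → LTL Ap → LTL Ap

variable {Ap : Type}

/-- Infinite words over the alphabet `2^Ap`. -/
abbrev Word (Ap : Type) := ℕ → Set Ap

/-- The suffix `w_k`. -/
def suffix (w : Word Ap) (k : ℕ) : Word Ap := fun i => w (i + k)

/-- Standard LTL semantics on infinite words. -/
def Sat : LTL Ap → Word Ap → Prop
  | .tt, _ => True
  | .ff, _ => False
  | .atom a, w => a ∈ w 0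
  | .natom a, w => a ∉ w 0
  | .and φ ψ, w => Sat φ w ∧ Sat ψ w
  | .or φ ψ, w => Sat φ w ∨ Sat ψ w
  | .next φ, w => Sat φ (suffix w 1)
  | .fut φ, w => ∃ k, Sat φ (suffix w k)
  | .glob φ, w => ∀ k, Sat φ (suffix w k)
  | .untl φ ψ, w => ∃ k, Sat ψ (suffix w k) ∧ ∀ j < k, Sat φ (suffix w j)

open Classical in
/-- The "after function" `af(φ, ν)`. -/
noncomputable def af : LTL Ap → Set Ap → LTL Ap
  | .tt, _ => .tt
  | .ff, _ => .ff
  | .atom a, ν => if a ∈ ν then .tt else .ff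
  | .natom a, ν => if a ∈ ν then .ff else .tt
  | .and φ ψ, ν => .and (af φ ν) (af ψ ν)
  | .or φ ψ, ν => .or (af φ ν) (af ψ ν)
  | .next φ, _ => φ
  | .fut φ, ν => .or (af φ ν) (.fut φ)
  | .glob φ, ν => .and (af φ ν) (.glob φ)
  | .untl φ ψ, ν => .or (af ψ ν) (.and (af φ ν) (.untl φ ψ))

/-- `af` extended to finite words. -/
noncomputable def afw (φ : LTL Ap) (u : List (Set Ap)) : LTL Ap := u.foldl af φ

open Classical in
/-- The variant `afG`, identical to `af` except `afG(Gφ, ν) = Gφ`. -/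
noncomputable def afG : LTL Ap → Set Ap → LTL Ap
  | .tt, _ => .tt
  | .ff, _ => .ff
  | .atom a, ν => if a ∈ ν then .tt else .ff
  | .natom a, ν => if a ∈ ν then .ff else .tt
  | .and φ ψ, ν => .and (afG φ ν) (afG ψ ν)
  | .or φ ψ, ν => .or (afG φ ν) (afG ψ ν)
  | .next φ, _ => φ
  | .fut φ, ν => .or (afG φ ν) (.fut φ)
  | .glob φ, _ => .glob φ
  | .untl φ ψ, ν => .or (afG ψ ν) (.and (afG φ ν) (.untl φ ψ))

/-- `afG` extended to finite words. -/
noncomputable def afGw (φ : LTL Ap) (u : List (Set Ap)) : LTL Ap := u.foldl afG φ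

/-- The finite infix `w[i..j] = w[i] w[i+1] ⋯ w[j]`. -/
def infixW (w : Word Ap) (i j : ℕ) : List (Set Ap) :=
  (List.range (j + 1 - i)).map (fun k => w (i + k))

/-- The finite prefix `w[0..i]`. -/
def prefixW (w : Word Ap) (i : ℕ) : List (Set Ap) := infixW w 0 i

/-- Concatenation of a finite word with an infinite word. -/
def cat (u : List (Set Ap)) (w : Word Ap) : Word Ap :=
  fun k => if h : k < u.length then u.get ⟨k, h⟩ else w (k - u.length)

/-- Propositional evaluation of a formula under a valuation `v`, treating
literals and temporal formulas (`X`, `F`, `G`, `U`) as opaque propositional atoms. -/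
def propSat (v : LTL Ap → Prop) : LTL Ap → Prop
  | .tt => True
  | .ff => False
  | .and φ ψ => propSat v φ ∧ propSat v ψ
  | .or φ ψ => propSat v φ ∨ propSat v ψ
  | φ => v φ

/-- A valuation is consistent on literals: `a` and `¬a` get complementary values. -/
def LitConsistent (v : LTL Ap → Prop) : Prop :=
  ∀ a : Ap, v (.atom a) ↔ ¬ v (.natom a)

/-- Propositional implication `φ ⊨_p ψ`. -/
def PropImp (φ ψ : LTL Ap) : Prop :=
  ∀ v : LTL Ap → Prop, LitConsistent v → propSat v φ → propSat v ψ

/-- Propositional equivalence `φ ≡_p ψ`. -/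
def PropEquiv (φ ψ : LTL Ap) : Prop :=
  ∀ v : LTL Ap → Prop, LitConsistent v → (propSat v φ ↔ propSat v ψ)

/-- `⋀_{χ ∈ H} χ ⊨_p ψ` : the (possibly infinite) conjunction of the
hypotheses `H` propositionally implies `ψ`. -/
def PropImpSet (H : Set (LTL Ap)) (ψ : LTL Ap) : Prop :=
  ∀ v : LTL Ap → Prop, LitConsistent v → (∀ χ ∈ H, propSat v χ) → propSat v ψ

/-- The list of subformulas of a formula. -/
def subfs : LTL Ap → List (LTL Ap)
  | .tt => [.tt]
  | .ff => [.ff]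
  | .atom a => [.atom a]
  | .natom a => [.natom a]
  | .and φ ψ => .and φ ψ :: (subfs φ ++ subfs ψ)
  | .or φ ψ => .or φ ψ :: (subfs φ ++ subfs ψ)
  | .next φ => .next φ :: subfs φ
  | .fut φ => .fut φ :: subfs φ
  | .glob φ => .glob φ :: subfs φ
  | .untl φ ψ => .untl φ ψ :: (subfs φ ++ subfs ψ)

/-- `Gψ` is a `G`-subformula of `φ`. -/
def GSub (φ ψ : LTL Ap) : Prop := LTL.glob ψ ∈ subfs φ

/-- A formula is `G`-free if it contains no occurrence of `G`. -/
def GFree : LTL Ap → Prop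
  | .glob _ => False
  | .and φ ψ => GFree φ ∧ GFree ψ
  | .or φ ψ => GFree φ ∧ GFree ψ
  | .next φ => GFree φ
  | .fut φ => GFree φ
  | .untl φ ψ => GFree φ ∧ GFree ψ
  | _ => True

/-- `ind(w, ψ)`: the least index `j` with `w_j ⊨ Gψ`. -/
noncomputable def ind (w : Word Ap) (ψ : LTL Ap) : ℕ :=
  sInf {j | Sat (.glob ψ) (suffix w j)}

/-! `af φ ν` is a one-step unfolding of the semantics: `w ⊨ af(φ, ν)` iff `ν·w ⊨ φ`. This is
proved by induction on `φ`, the temporal cases being the expansion laws `Fφ ≡ φ ∨ XFφ`,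
`Gφ ≡ φ ∧ XGφ` and `φUψ ≡ ψ ∨ (φ ∧ X(φUψ))`; the theorem follows by induction on the finite
word. -/

theorem _root_.Nat.exists_and_forall_lt_iff {p q : ℕ → Prop} :
    (∃ k, q k ∧ ∀ j < k, p j) ↔ q 0 ∨ p 0 ∧ ∃ k, q (k + 1) ∧ ∀ j < k, p (j + 1) := by
  simp only [← Nat.or_exists_add_one (p := fun k => q k ∧ ∀ j < k, p j), Nat.forall_lt_succ_left,
    Nat.not_lt_zero, false_imp_iff, implies_true, and_true, ← exists_and_left, and_left_comm]

theorem sat_af_iff (φ : LTL Ap) (ν : Set Ap) (w : Word Ap) :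
    Sat (af φ ν) w ↔ Sat φ (Stream'.cons ν w) := by
  set v := Stream'.cons ν w
  -- `suffix v (k + 1)` is `suffix w k` by `rfl`, which the temporal cases rely on.
  induction φ with
  | atom a | natom a => by_cases h : a ∈ ν <;> simp [af, Sat, h, v, Stream'.cons]
  | and φ ψ ihφ ihψ | or φ ψ ihφ ihψ => simp only [af, Sat, ihφ, ihψ]
  | fut φ ih =>
    exact (or_congr ih .rfl).trans (Nat.or_exists_add_one (p := fun k => Sat φ (suffix v k)))
  | glob φ ih =>
    exact (and_congr ih .rfl).trans (Nat.and_forall_add_one (p := fun k => Sat φ (suffix v k)))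
  | untl φ ψ ihφ ihψ =>
    exact (or_congr ihψ (and_congr ihφ .rfl)).trans (Nat.exists_and_forall_lt_iff
      (p := fun k => Sat φ (suffix v k)) (q := fun k => Sat ψ (suffix v k))).symm
  | _ => rfl

theorem cat_nil (w : Word Ap) : cat [] w = w := by
  funext k
  simp [cat]

theorem cat_cons (ν : Set Ap) (u : List (Set Ap)) (w : Word Ap) :
    cat (ν :: u) w = Stream'.cons ν (cat u w) := by
  funext k
  cases k with
  | zero => rfl
  | succ k => simp only [cat, List.length_cons, Nat.succ_lt_succ_iff, Nat.succ_sub_succ]; rfl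

/-- for every formula `φ`, finite word `u` and infinite word `w'`,
`u·w' ⊨ φ` iff `w' ⊨ af(φ, u)`. -/
theorem fundamental_af {Ap : Type} (φ : LTL Ap) (u : List (Set Ap)) (w' : Word Ap) :
    Sat φ (cat u w') ↔ Sat (afw φ u) w' := by
  induction u generalizing φ with
  | nil => rw [cat_nil]; rfl
  | cons ν u ih => rw [cat_cons, ← sat_af_iff]; exact ih (af φ ν)

end LTLF
end

section
/- For every G-free LTL formula φ and every infinite word w, w satisfies φ if and only if there exists i ∈ ℕ such that af(φ, w[0..i]) is propositionally equivalent to tt, where w[0..i] denotes the prefix of w of length i+1. -/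
namespace LTLF

variable {Ap : Type}

/-! Soundness: one `af`-step moves satisfaction one letter forward,
`Sat (af φ (w 0)) (suffix w 1) ↔ Sat φ w`, and a propositionally valid formula holds on every
word, because truth on a word is a literal-consistent valuation of the temporal atoms.

Completeness, by induction on the `G`-free formula: `af` acts on the propositional structure as a
substitution, so validity survives further steps, and a satisfied `F`- or `U`-formula becomes valid
once the prefix reaches the witness position of its argument (together with the positions where
the left argument of `U` has to hold). A formula `Gψ` would never become valid this way. -/

lemma suffix_suffix (w : Word Ap) (a b : ℕ) : suffix (suffix w a) b = suffix w (b + a) := by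
  funext n
  simp [suffix, Nat.add_assoc]

lemma afw_cons (φ : LTL Ap) (ν : Set Ap) (u : List (Set Ap)) :
    afw φ (ν :: u) = afw (af φ ν) u := rfl

lemma afw_append (φ : LTL Ap) (u u' : List (Set Ap)) : afw φ (u ++ u') = afw (afw φ u) u' :=
  List.foldl_append

lemma afw_and (φ ψ : LTL Ap) (u : List (Set Ap)) :
    afw (.and φ ψ) u = .and (afw φ u) (afw ψ u) := by
  induction u generalizing φ ψ with
  | nil => rfl
  | cons ν u ih => exact ih _ _

lemma afw_or (φ ψ : LTL Ap) (u : List (Set Ap)) :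
    afw (.or φ ψ) u = .or (afw φ u) (afw ψ u) := by
  induction u generalizing φ ψ with
  | nil => rfl
  | cons ν u ih => exact ih _ _

lemma afw_fut_cons (φ : LTL Ap) (ν : Set Ap) (u : List (Set Ap)) :
    afw (.fut φ) (ν :: u) = .or (afw φ (ν :: u)) (afw (.fut φ) u) :=
  afw_or _ _ u

lemma afw_untl_cons (φ ψ : LTL Ap) (ν : Set Ap) (u : List (Set Ap)) :
    afw (.untl φ ψ) (ν :: u) =
      .or (afw ψ (ν :: u)) (.and (afw φ (ν :: u)) (afw (.untl φ ψ) u)) := by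
  rw [afw_cons, af, afw_or, afw_and]
  rfl

lemma sat_af (φ : LTL Ap) (w : Word Ap) : Sat (af φ (w 0)) (suffix w 1) ↔ Sat φ w := by
  induction φ generalizing w with
  | tt | ff | next φ => rfl
  | atom a | natom a => by_cases h : a ∈ w 0 <;> simp [af, Sat, h]
  | and φ ψ ihφ ihψ | or φ ψ ihφ ihψ => simp only [af, Sat, ihφ, ihψ]
  | fut φ ih =>
    simp only [af, Sat, suffix_suffix, ih]
    exact Nat.or_exists_add_one (p := fun k => Sat φ (suffix w k))
  | glob φ ih =>
    simp only [af, Sat, suffix_suffix, ih]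
    exact Nat.and_forall_add_one (p := fun k => Sat φ (suffix w k))
  | untl φ ψ ihφ ihψ =>
    simp only [af, Sat, suffix_suffix, ihφ, ihψ]
    constructor
    · rintro (hψ | ⟨hφ, k, hψ, hφs⟩)
      · exact ⟨0, hψ, nofun⟩
      · exact ⟨k + 1, hψ, Nat.forall_lt_succ_left'.2 ⟨hφ, hφs⟩⟩
    · rintro ⟨_ | k, hψ, hφs⟩
      · exact .inl hψ
      · obtain ⟨hφ, hφs⟩ := Nat.forall_lt_succ_left'.1 hφs
        exact .inr ⟨hφ, k, hψ, hφs⟩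

lemma prefixW_zero (w : Word Ap) : prefixW w 0 = [w 0] := rfl

lemma prefixW_succ (w : Word Ap) (i : ℕ) :
    prefixW w (i + 1) = prefixW w i ++ [w (i + 1)] := by
  simp [prefixW, infixW, List.range_succ]

lemma prefixW_succ_eq_cons (w : Word Ap) (i : ℕ) :
    prefixW w (i + 1) = w 0 :: prefixW (suffix w 1) i := by
  simp [prefixW, infixW, List.range_succ_eq_map, suffix, Function.comp_def]

lemma prefixW_eq_cons (w : Word Ap) (i : ℕ) : ∃ u, prefixW w i = w 0 :: u := by
  cases i with
  | zero => exact ⟨[], prefixW_zero w⟩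
  | succ i => exact ⟨_, prefixW_succ_eq_cons w i⟩

lemma prefixW_prefix_of_le (w : Word Ap) {i j : ℕ} (h : i ≤ j) :
    prefixW w i <+: prefixW w j := by
  induction j, h using Nat.le_induction with
  | base => exact List.prefix_refl _
  | succ j _ ih => exact ih.trans (prefixW_succ w j ▸ List.prefix_append _ _)

lemma sat_afw_prefixW (φ : LTL Ap) (w : Word Ap) (i : ℕ) :
    Sat (afw φ (prefixW w i)) (suffix w (i + 1)) ↔ Sat φ w := by
  induction i generalizing φ w with
  | zero => exact sat_af φ w
  | succ i ih =>
    have h := ih (af φ (w 0)) (suffix w 1)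
    rw [suffix_suffix] at h
    rw [prefixW_succ_eq_cons, afw_cons, h, sat_af]

lemma propSat_af (v : LTL Ap → Prop) (ν : Set Ap) (χ : LTL Ap) :
    propSat v (af χ ν) ↔ propSat (fun ρ => propSat v (af ρ ν)) χ := by
  induction χ with
  | and φ ψ ihφ ihψ | or φ ψ ihφ ihψ => simp only [af, propSat, ihφ, ihψ]
  | _ => exact Iff.rfl

lemma litConsistent_propSat_af (v : LTL Ap → Prop) (ν : Set Ap) :
    LitConsistent (fun ρ => propSat v (af ρ ν)) := by
  intro a
  by_cases h : a ∈ ν <;> simp [af, h, propSat]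

lemma litConsistent_sat (w : Word Ap) : LitConsistent (fun χ => Sat χ w) := by
  intro a
  simp [Sat]

lemma propSat_sat (w : Word Ap) (χ : LTL Ap) : propSat (fun ρ => Sat ρ w) χ ↔ Sat χ w := by
  induction χ with
  | and φ ψ ihφ ihψ | or φ ψ ihφ ihψ => simp only [propSat, Sat, ihφ, ihψ]
  | tt | ff => simp [propSat, Sat]
  | _ => exact Iff.rfl

def PropValid (φ : LTL Ap) : Prop := ∀ v : LTL Ap → Prop, LitConsistent v → propSat v φ

lemma propEquiv_tt_iff (φ : LTL Ap) : PropEquiv φ .tt ↔ PropValid φ :=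
  forall₂_congr fun v _ => by simp [propSat]

namespace PropValid

variable {φ ψ : LTL Ap}

lemma tt : PropValid (.tt : LTL Ap) := fun _ _ => trivial

lemma and (hφ : PropValid φ) (hψ : PropValid ψ) : PropValid (.and φ ψ) :=
  fun v hv => ⟨hφ v hv, hψ v hv⟩

lemma or_left (hφ : PropValid φ) (ψ : LTL Ap) : PropValid (.or φ ψ) :=
  fun v hv => Or.inl (hφ v hv)

lemma or_right (φ : LTL Ap) (hψ : PropValid ψ) : PropValid (.or φ ψ) :=
  fun v hv => Or.inr (hψ v hv)

lemma af (hφ : PropValid φ) (ν : Set Ap) : PropValid (af φ ν) := fun v _ =>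
  (propSat_af v ν φ).2 (hφ _ (litConsistent_propSat_af v ν))

lemma afw (hφ : PropValid φ) (u : List (Set Ap)) : PropValid (afw φ u) := by
  induction u generalizing φ with
  | nil => exact hφ
  | cons ν u ih => exact ih (hφ.af ν)

lemma sat (hφ : PropValid φ) (w : Word Ap) : Sat φ w :=
  (propSat_sat w φ).1 (hφ _ (litConsistent_sat w))

end PropValid

lemma propValid_afw_prefixW_mono {φ : LTL Ap} {w : Word Ap} {i j : ℕ} (h : i ≤ j)
    (hi : PropValid (afw φ (prefixW w i))) : PropValid (afw φ (prefixW w j)) := by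
  obtain ⟨u, hu⟩ := prefixW_prefix_of_le w h
  rw [← hu, afw_append]
  exact hi.afw u

def EventuallyValid (φ : LTL Ap) (w : Word Ap) : Prop :=
  ∃ i, PropValid (afw φ (prefixW w i))

namespace EventuallyValid

variable {φ ψ : LTL Ap} {w : Word Ap}

lemma of_af (h : PropValid (af φ (w 0))) : EventuallyValid φ w := ⟨0, h⟩

lemma of_af_suffix (h : EventuallyValid (af φ (w 0)) (suffix w 1)) : EventuallyValid φ w := by
  obtain ⟨i, hi⟩ := h
  exact ⟨i + 1, by rwa [prefixW_succ_eq_cons, afw_cons]⟩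

lemma and (hφ : EventuallyValid φ w) (hψ : EventuallyValid ψ w) :
    EventuallyValid (.and φ ψ) w := by
  obtain ⟨i, hi⟩ := hφ
  obtain ⟨j, hj⟩ := hψ
  refine ⟨max i j, ?_⟩
  rw [afw_and]
  exact (propValid_afw_prefixW_mono (le_max_left i j) hi).and
    (propValid_afw_prefixW_mono (le_max_right i j) hj)

lemma or_left (hφ : EventuallyValid φ w) (ψ : LTL Ap) : EventuallyValid (.or φ ψ) w := by
  obtain ⟨i, hi⟩ := hφ
  exact ⟨i, by rw [afw_or]; exact hi.or_left _⟩

lemma or_right (φ : LTL Ap) (hψ : EventuallyValid ψ w) : EventuallyValid (.or φ ψ) w := by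
  obtain ⟨i, hi⟩ := hψ
  exact ⟨i, by rw [afw_or]; exact hi.or_right _⟩

lemma next (h : EventuallyValid φ (suffix w 1)) : EventuallyValid (.next φ) w :=
  of_af_suffix h

lemma fut_of_now (h : EventuallyValid φ w) : EventuallyValid (.fut φ) w := by
  obtain ⟨i, hi⟩ := h
  obtain ⟨u, hu⟩ := prefixW_eq_cons w i
  refine ⟨i, ?_⟩
  rw [hu, afw_fut_cons, ← hu]
  exact hi.or_left _

lemma fut {k : ℕ} (h : EventuallyValid φ (suffix w k)) : EventuallyValid (.fut φ) w := by
  induction k generalizing w with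
  | zero => exact fut_of_now h
  | succ k ih =>
    rw [← suffix_suffix] at h
    exact of_af_suffix ((ih h).or_right _)

lemma untl_of_now (h : EventuallyValid ψ w) : EventuallyValid (.untl φ ψ) w := by
  obtain ⟨i, hi⟩ := h
  obtain ⟨u, hu⟩ := prefixW_eq_cons w i
  refine ⟨i, ?_⟩
  rw [hu, afw_untl_cons, ← hu]
  exact hi.or_left _

lemma untl_of_next (hφ : EventuallyValid φ w) (h : EventuallyValid (.untl φ ψ) (suffix w 1)) :
    EventuallyValid (.untl φ ψ) w := by
  obtain ⟨i, hi⟩ := hφ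
  obtain ⟨j, hj⟩ := h
  refine ⟨max i j + 1, ?_⟩
  rw [prefixW_succ_eq_cons, afw_untl_cons, ← prefixW_succ_eq_cons]
  exact ((propValid_afw_prefixW_mono (by omega) hi).and
    (propValid_afw_prefixW_mono (le_max_right i j) hj)).or_right _

lemma untl {k : ℕ} (hψ : EventuallyValid ψ (suffix w k))
    (hφ : ∀ j < k, EventuallyValid φ (suffix w j)) : EventuallyValid (.untl φ ψ) w := by
  induction k generalizing w with
  | zero => exact untl_of_now hψ
  | succ k ih =>
    rw [← suffix_suffix] at hψ
    refine untl_of_next (hφ 0 k.succ_pos) (ih hψ fun j hj => ?_)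
    rw [suffix_suffix]
    exact hφ (j + 1) (by omega)

end EventuallyValid

lemma eventuallyValid_of_sat {φ : LTL Ap} (hφ : GFree φ) {w : Word Ap} (h : Sat φ w) :
    EventuallyValid φ w := by
  induction φ generalizing w with
  | tt => exact .of_af .tt
  | ff => exact h.elim
  | atom a => exact .of_af (by simpa [af, show a ∈ w 0 from h] using PropValid.tt)
  | natom a => exact .of_af (by simpa [af, show a ∉ w 0 from h] using PropValid.tt)
  | and φ ψ ihφ ihψ => exact (ihφ hφ.1 h.1).and (ihψ hφ.2 h.2)
  | or φ ψ ihφ ihψ =>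
    exact h.elim (fun h => (ihφ hφ.1 h).or_left ψ) fun h => (ihψ hφ.2 h).or_right φ
  | next φ ih => exact .next (ih hφ h)
  | fut φ ih =>
    obtain ⟨k, hk⟩ := h
    exact .fut (ih hφ hk)
  | glob φ ih => exact hφ.elim
  | untl φ ψ ihφ ihψ =>
    obtain ⟨k, hψ, hφs⟩ := h
    exact .untl (ihψ hφ.2 hψ) fun j hj => ihφ hφ.1 (hφs j hj)

/-- a `G`-free formula `φ` holds on `w` iff some prefix drives it
(propositionally) to `tt`. -/
theorem gfree_sat_iff_af_tt {Ap : Type} (φ : LTL Ap) (hφ : GFree φ) (w : Word Ap) :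
    Sat φ w ↔ ∃ i : ℕ, PropEquiv (afw φ (prefixW w i)) LTL.tt := by
  simp only [propEquiv_tt_iff]
  refine ⟨eventuallyValid_of_sat hφ, fun ⟨i, hi⟩ => ?_⟩
  exact (sat_afw_prefixW φ w i).1 (hi.sat _)

end LTLF
end

section
/- Let φ be an LTL formula, G a set of G-subformulas of φ, and afG the variant of af satisfying afG(Gψ,ν)=Gψ. If a formula φ' is propositionally implied by the conjunction ⋀_{Gψ∈G} Gψ, then for every letter ν ∈ 2^Ap, the formula afG(φ',ν) is also propositionally implied by ⋀_{Gψ∈G} Gψ. -/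
namespace LTLF

variable {Ap : Type}

/-
`afG (·, ν)` commutes with `∧` and `∨` and sends literals to `tt` or `ff`, so it acts as a
propositional substitution: `v` satisfies `afG χ ν` exactly when the valuation
`ψ ↦ (v satisfies afG ψ ν)` satisfies `χ`. That valuation is consistent on literals, and it
agrees with `v` on every `Gψ` because `afG` fixes `Gψ`; so it inherits the hypotheses from `v`.
-/

theorem propSat_afG (v : LTL Ap → Prop) (ν : Set Ap) (χ : LTL Ap) :
    propSat v (afG χ ν) ↔ propSat (fun ψ => propSat v (afG ψ ν)) χ := by
  induction χ with
  | tt | ff => simp only [afG, propSat]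
  | and φ ψ ih₁ ih₂ | or φ ψ ih₁ ih₂ => simp only [afG, propSat, ih₁, ih₂]
  | atom | natom | next | fut | glob | untl => rfl

theorem litConsistent_propSat_afG (v : LTL Ap → Prop) (ν : Set Ap) :
    LitConsistent fun ψ => propSat v (afG ψ ν) := by
  intro a
  by_cases ha : a ∈ ν <;> simp [afG, ha, propSat]

theorem PropImpSet.afG {H : Set (LTL Ap)} {φ' : LTL Ap} (ν : Set Ap)
    (hH : ∀ χ ∈ H, afG χ ν = χ) (h : PropImpSet H φ') : PropImpSet H (afG φ' ν) := by
  intro v _ hv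
  rw [propSat_afG]
  refine h _ (litConsistent_propSat_afG v ν) fun χ hχ => ?_
  rw [← propSat_afG, hH χ hχ]
  exact hv χ hχ

theorem afG_preserves_propImp_general {Ap : Type} (G : Set (LTL Ap)) (φ' : LTL Ap)
    (h : PropImpSet (LTL.glob '' G) φ') (ν : Set Ap) :
    PropImpSet (LTL.glob '' G) (afG φ' ν) := by
  refine h.afG ν ?_
  rintro _ ⟨ψ, -, rfl⟩
  rfl

/-- if `⋀_{Gψ∈G} Gψ ⊨_p φ'` then `⋀_{Gψ∈G} Gψ ⊨_p afG(φ', ν)`: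
accepting states of `M(φ, G)` are closed under transitions. -/
theorem afG_preserves_propImp {Ap : Type} (φ : LTL Ap) (G : Set (LTL Ap))
    (hG : ∀ ψ ∈ G, GSub φ ψ) (φ' : LTL Ap)
    (h : PropImpSet (LTL.glob '' G) φ') (ν : Set Ap) :
    PropImpSet (LTL.glob '' G) (afG φ' ν) :=
  afG_preserves_propImp_general G φ' h ν

end LTLF
end

section
/- For every LTL formula φ in negation normal form and every letter ν ∈ 2^Ap, the formula afG(φ,ν) propositionally implies af(φ,ν) under the assumption of all G-subformulas: precisely, af(φ,ν) is propositionally implied by afG(φ,ν) ∧ ⋀_{Gψ ∈ GG(φ)} (Gψ → af(ψ,ν)). -/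
/-!
`af` and `afG` differ only at `G`-nodes, where `afG (G ψ) ν = G ψ`; together with the assumption
`G ψ → af ψ ν` this yields `af (G ψ) ν = af ψ ν ∧ G ψ`. Everywhere else the two functions are built
by the same monotone connectives, so structural induction carries the implication up, the
assumptions passing to subformulas since `subfs` is transitive.
-/

namespace LTLF

variable {Ap : Type}

@[simp]
theorem mem_subfs_self (φ : LTL Ap) : φ ∈ subfs φ := by
  cases φ <;> simp [subfs]

theorem subfs_subset_of_mem {φ χ : LTL Ap} (h : χ ∈ subfs φ) : subfs χ ⊆ subfs φ := by
  induction φ with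
  | tt | ff | atom | natom => simp_all [subfs]
  | next φ ih | fut φ ih | glob φ ih =>
    rcases List.mem_cons.1 h with rfl | h
    · exact List.Subset.refl _
    · exact List.subset_cons_of_subset _ (ih h)
  | and φ ψ ihφ ihψ | or φ ψ ihφ ihψ | untl φ ψ ihφ ihψ =>
    rcases List.mem_cons.1 h with rfl | h
    · exact List.Subset.refl _
    rcases List.mem_append.1 h with h | h
    · exact List.subset_cons_of_subset _ (List.subset_append_of_subset_left _ (ihφ h))
    · exact List.subset_cons_of_subset _ (List.subset_append_of_subset_right _ (ihψ h))

theorem forall_GSub_of_mem_subfs {φ χ : LTL Ap} {P : LTL Ap → Prop}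
    (h : ∀ ψ, GSub φ ψ → P ψ) (hχ : χ ∈ subfs φ) : ∀ ψ, GSub χ ψ → P ψ :=
  fun ψ hψ => h ψ (subfs_subset_of_mem hχ hψ)

theorem afG_with_G_assumptions_implies_af_general {Ap : Type} (φ : LTL Ap) (ν : Set Ap)
    (v : LTL Ap → Prop)
    (h0 : propSat v (afG φ ν))
    (h1 : ∀ ψ : LTL Ap, GSub φ ψ → (propSat v (LTL.glob ψ) → propSat v (af ψ ν))) :
    propSat v (af φ ν) := by
  induction φ with
  | tt | ff | atom | natom | next => exact h0
  | glob φ => exact ⟨h1 φ (mem_subfs_self _) h0, h0⟩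
  | and φ ψ ihφ ihψ =>
    exact ⟨ihφ h0.1 (forall_GSub_of_mem_subfs h1 (by simp [subfs])),
      ihψ h0.2 (forall_GSub_of_mem_subfs h1 (by simp [subfs]))⟩
  | or φ ψ ihφ ihψ =>
    exact h0.imp (ihφ · (forall_GSub_of_mem_subfs h1 (by simp [subfs])))
      (ihψ · (forall_GSub_of_mem_subfs h1 (by simp [subfs])))
  | fut φ ih =>
    exact h0.imp_left (ih · (forall_GSub_of_mem_subfs h1 (by simp [subfs])))
  | untl φ ψ ihφ ihψ =>
    exact h0.imp (ihψ · (forall_GSub_of_mem_subfs h1 (by simp [subfs])))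
      (And.imp_left (ihφ · (forall_GSub_of_mem_subfs h1 (by simp [subfs]))))

/-- `afG(φ,ν) ∧ ⋀_{Gψ ∈ GG(φ)} (Gψ → af(ψ,ν)) ⊨_p af(φ,ν)`. -/
theorem afG_with_G_assumptions_implies_af {Ap : Type} (φ : LTL Ap) (ν : Set Ap)
    (v : LTL Ap → Prop) (hv : LitConsistent v)
    (h0 : propSat v (afG φ ν))
    (h1 : ∀ ψ : LTL Ap, GSub φ ψ → (propSat v (LTL.glob ψ) → propSat v (af ψ ν))) :
    propSat v (af φ ν) :=
  afG_with_G_assumptions_implies_af_general φ ν v h0 h1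

end LTLF
end
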